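/- Let H be a cancellative commutative monoid with zero (1 ≠ 0) and let r be a finitary ideal system on H. Then the set r-spec(H) of prime r-ideals is proconstructible in I_r(H); in particular, r-spec(H), endowed with the subspace (Zariski) topology, is a spectral space. -/

import Mathlib

open Set Topology

/-- A topological space is spectral if it is quasi-compact, `T0`, sober (every nonempty
irreducible closed subset has a unique generic point), and its quasi-compact open subsets
form a basis of the topology that is closed under finite intersections. -/
def IsSpectralSpace (X : Type*) [TopologicalSpace X] : Prop :=
  CompactSpace X ∧ T0Space X ∧ QuasiSober X ∧
    TopologicalSpace.IsTopologicalBasis {U : Set X | IsOpen U ∧ IsCompact U} ∧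
    ∀ U V : Set X, IsOpen U → IsCompact U → IsOpen V → IsCompact V → IsCompact (U ∩ V)

/-- The constructible topology associated with a topology: the topology generated by the
sets `U ∩ Vᶜ` with `U`, `V` quasi-compact open subsets. -/
def constructibleTop (X : Type*) [TopologicalSpace X] : TopologicalSpace X :=
  TopologicalSpace.generateFrom
    {s : Set X | ∃ U V : Set X, IsOpen U ∧ IsCompact U ∧ IsOpen V ∧ IsCompact V ∧ s = U ∩ Vᶜ}

/-- An ideal system on a cancellative commutative monoid with zero `H`. -/
structure IdealSystem (H : Type*) [CommMonoidWithZero H] [IsCancelMulZero H] where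
  toFun : Set H → Set H
  id1 : ∀ X : Set H, X ∪ {0} ⊆ toFun X
  id2 : ∀ X Y : Set H, X ⊆ toFun Y → toFun X ⊆ toFun Y
  id3 : ∀ (c : H) (X : Set H), (fun x => c * x) '' toFun X = toFun ((fun x => c * x) '' X)
  id4 : ∀ c y : H, c * y ∈ toFun {c}

/-- An ideal system is finitary if `X_r` is the union of `E_r` over finite subsets `E ⊆ X`. -/
def IdealSystem.Finitary {H : Type*} [CommMonoidWithZero H] [IsCancelMulZero H] (r : IdealSystem H) : Prop :=
  ∀ X : Set H, r.toFun X = ⋃ E ∈ {E : Set H | E ⊆ X ∧ E.Finite}, r.toFun E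

/-- The set `I_r(H)` of all `r`-ideals of `H`. -/
def RIdeals {H : Type*} [CommMonoidWithZero H] [IsCancelMulZero H] (r : IdealSystem H) : Type _ :=
  {I : Set H // ∃ X : Set H, I = r.toFun X}

/-- The Zariski topology on `I_r(H)`, generated by the sets `U_r(x) = {I | x ∉ I}`. -/
instance {H : Type*} [CommMonoidWithZero H] [IsCancelMulZero H] (r : IdealSystem H) :
    TopologicalSpace (RIdeals r) :=
  TopologicalSpace.generateFrom
    {U : Set (RIdeals r) | ∃ x : H, U = {I | x ∉ I.1}}

/-- The set of prime `r`-ideals, as a subset of `I_r(H)`. -/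
def rSpecSet {H : Type*} [CommMonoidWithZero H] [IsCancelMulZero H] (r : IdealSystem H) :
    Set (RIdeals r) :=
  {I | I.1 ≠ Set.univ ∧ ∀ a b : H, a * b ∈ I.1 → a ∈ I.1 ∨ b ∈ I.1}

/-!
For an ultrafilter `𝒰` on `I_r(H)`, the elements of `H` lying in `𝒰`-almost every `r`-ideal form
an `r`-ideal, since `r` is finitary, and `𝒰` converges to it in the Zariski topology. This limit
lies in `U_r(x)` when `𝒰`-almost every member does, and it is prime when `𝒰` is concentrated on
primes; so every finite intersection of sets `U_r(x)`, also intersected with `r-spec(H)`, is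
quasi-compact. Proconstructibility follows because the complement of `r-spec(H)` is the union of
`I_r(H) \ U_r(1)` and the sets `U_r(a) ∩ U_r(b) \ U_r(ab)`. On `r-spec(H)` these intersections
form a basis of quasi-compact opens closed under intersections; specialisation is inclusion, so
the intersection of the members of an irreducible closed set of primes, which is prime by
irreducibility, is its generic point.
-/

namespace IdealSystem

variable {H : Type*} [CommMonoidWithZero H] [IsCancelMulZero H] (r : IdealSystem H)

lemma subset_toFun (X : Set H) : X ⊆ r.toFun X := fun _ hx => r.id1 X (Or.inl hx)

end IdealSystem

lemma isOpen_constructibleTop_inter_compl {X : Type*} [TopologicalSpace X] {U V : Set X}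
    (hUo : IsOpen U) (hUc : IsCompact U) (hVo : IsOpen V) (hVc : IsCompact V) :
    IsOpen[constructibleTop X] (U ∩ Vᶜ) :=
  TopologicalSpace.isOpen_generateFrom_of_mem ⟨U, V, hUo, hUc, hVo, hVc, rfl⟩

lemma SpectralSpace.isSpectralSpace (X : Type*) [TopologicalSpace X] [SpectralSpace X] :
    IsSpectralSpace X :=
  ⟨inferInstance, inferInstance, inferInstance, PrespectralSpace.isTopologicalBasis,
    fun _ _ hUo hUc hVo hVc => hUc.inter_of_isOpen hVc hUo hVo⟩

namespace RIdeals

open TopologicalSpace Filter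

variable {H : Type*} [CommMonoidWithZero H] [IsCancelMulZero H] {r : IdealSystem H}

lemma toFun_eq (I : RIdeals r) : r.toFun I.1 = I.1 := by
  obtain ⟨X, hX⟩ := I.2
  exact ((r.id2 _ X hX.le).trans hX.ge).antisymm (r.subset_toFun _)

lemma toFun_subset (I : RIdeals r) {X : Set H} (h : X ⊆ I.1) : r.toFun X ⊆ I.1 :=
  (r.id2 X I.1 (h.trans (r.subset_toFun _))).trans (toFun_eq I).le

lemma eq_univ_iff_one_mem (I : RIdeals r) : I.1 = univ ↔ (1 : H) ∈ I.1 := by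
  refine ⟨fun h => h ▸ mem_univ 1, fun h => eq_univ_of_forall fun y => ?_⟩
  exact toFun_subset I (singleton_subset_iff.2 h) (by simpa using r.id4 1 y)

def ofToFunSubset (J : Set H) (h : r.toFun J ⊆ J) : RIdeals r :=
  ⟨J, J, (h.antisymm (r.subset_toFun J)).symm⟩

def biInter (C : Set (RIdeals r)) : RIdeals r :=
  ofToFunSubset (⋂ I ∈ C, I.1) (subset_iInter₂ fun I hI => toFun_subset I (biInter_subset_of_mem hI))

variable (r) in
/-- The basic open set `U_r(x₁) ∩ ⋯ ∩ U_r(xₙ)` of the Zariski topology. -/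
def basicOpen (s : Finset H) : Set (RIdeals r) := {I | ∀ x ∈ s, x ∉ I.1}

section BasicOpen

variable (r)

@[simp]
lemma basicOpen_empty : basicOpen r ∅ = univ := by simp [basicOpen]

lemma basicOpen_insert [DecidableEq H] (x : H) (s : Finset H) :
    basicOpen r (insert x s) = {I | x ∉ I.1} ∩ basicOpen r s := by
  ext I; simp [basicOpen]

lemma basicOpen_union [DecidableEq H] (s t : Finset H) :
    basicOpen r (s ∪ t) = basicOpen r s ∩ basicOpen r t := by
  ext I; simp [basicOpen, or_imp, forall_and]

lemma isOpen_setOf_notMem (x : H) : IsOpen {I : RIdeals r | x ∉ I.1} :=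
  isOpen_generateFrom_of_mem ⟨x, rfl⟩

lemma isOpen_basicOpen (s : Finset H) : IsOpen (basicOpen r s) := by
  have : basicOpen r s = ⋂ x ∈ s, {I | x ∉ I.1} := by ext; simp [basicOpen]
  exact this ▸ isOpen_biInter_finset fun x _ => isOpen_setOf_notMem r x

lemma isTopologicalBasis_basicOpen : IsTopologicalBasis (range (basicOpen r)) := by
  classical
  refine isTopologicalBasis_of_subbasis_of_finiteInter (le_antisymm ?_ ?_)
    ⟨⟨∅, basicOpen_empty r⟩, ?_⟩
  · exact le_generateFrom (forall_mem_range.2 (isOpen_basicOpen r))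
  · refine le_generateFrom fun U ⟨x, hU⟩ => isOpen_generateFrom_of_mem ⟨{x}, ?_⟩
    simp [hU, basicOpen]
  · rintro _ ⟨s, rfl⟩ _ ⟨t, rfl⟩
    exact ⟨s ∪ t, basicOpen_union r s t⟩

end BasicOpen

lemma specializes_iff_subset {I J : RIdeals r} : I ⤳ J ↔ I.1 ⊆ J.1 := by
  refine ⟨fun h x hx => ?_, fun h => ?_⟩
  · by_contra hxJ
    exact h.mem_open (isOpen_setOf_notMem r x) hxJ hx
  · refine specializes_iff_forall_open.2 fun U hU hJ => ?_
    obtain ⟨_, ⟨s, rfl⟩, hJs, hsU⟩ := (isTopologicalBasis_basicOpen r).exists_subset_of_mem_open hJ hU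
    exact hsU fun x hx hxI => hJs x hx (h hxI)

instance : T0Space (RIdeals r) :=
  (t0Space_iff_inseparable _).2 fun _ _ h => Subtype.ext <|
    (specializes_iff_subset.1 h.specializes).antisymm (specializes_iff_subset.1 h.specializes')

section Ultrafilter

variable (hr : r.Finitary)
include hr

def limIdeal (𝒰 : Ultrafilter (RIdeals r)) : RIdeals r :=
  ofToFunSubset {z | ∀ᶠ I in (𝒰 : Filter (RIdeals r)), z ∈ I.1} fun z hz => by
    rw [hr] at hz
    obtain ⟨E, ⟨hEX, hEfin⟩, hzE⟩ := mem_iUnion₂.1 hz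
    filter_upwards [(eventually_all_finite hEfin).2 fun e he => hEX he] with I hEI
    exact toFun_subset I hEI hzE

lemma mem_limIdeal {𝒰 : Ultrafilter (RIdeals r)} {z : H} :
    z ∈ (limIdeal hr 𝒰).1 ↔ ∀ᶠ I in (𝒰 : Filter (RIdeals r)), z ∈ I.1 :=
  Iff.rfl

lemma le_nhds_limIdeal (𝒰 : Ultrafilter (RIdeals r)) : ↑𝒰 ≤ 𝓝 (limIdeal hr 𝒰) := by
  refine nhds_generateFrom.symm ▸ le_iInf₂ fun U ⟨hU, x, hUx⟩ => le_principal_iff.2 ?_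
  rw [hUx] at hU ⊢
  exact Ultrafilter.eventually_not.2 hU

lemma limIdeal_mem_basicOpen {𝒰 : Ultrafilter (RIdeals r)} {s : Finset H}
    (h : basicOpen r s ∈ 𝒰) : limIdeal hr 𝒰 ∈ basicOpen r s := fun x hx hxlim => by
  obtain ⟨I, hxI, hI⟩ := (((mem_limIdeal hr).1 hxlim).and h).exists
  exact hI x hx hxI

lemma limIdeal_mem_rSpecSet {𝒰 : Ultrafilter (RIdeals r)} (h : rSpecSet r ∈ 𝒰) :
    limIdeal hr 𝒰 ∈ rSpecSet r := by
  have hone : basicOpen r {1} ∈ 𝒰 := Filter.mem_of_superset h fun I hI => by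
    simpa [basicOpen, ← eq_univ_iff_one_mem] using hI.1
  refine ⟨fun huniv => ?_, fun a b hab => ?_⟩
  · exact limIdeal_mem_basicOpen hr hone 1 (Finset.mem_singleton_self 1)
      ((eq_univ_iff_one_mem _).1 huniv)
  · refine Ultrafilter.eventually_or.1 ?_
    filter_upwards [(mem_limIdeal hr).1 hab, h] with I habI hI using hI.2 a b habI

lemma isCompact_of_limIdeal_mem {K : Set (RIdeals r)}
    (h : ∀ 𝒰 : Ultrafilter (RIdeals r), K ∈ 𝒰 → limIdeal hr 𝒰 ∈ K) : IsCompact K :=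
  isCompact_iff_ultrafilter_le_nhds.2 fun 𝒰 hK =>
    ⟨limIdeal hr 𝒰, h 𝒰 (le_principal_iff.1 hK), le_nhds_limIdeal hr 𝒰⟩

lemma isCompact_basicOpen (s : Finset H) : IsCompact (basicOpen r s) :=
  isCompact_of_limIdeal_mem hr fun _ => limIdeal_mem_basicOpen hr

lemma isCompact_rSpecSet_inter_basicOpen (s : Finset H) :
    IsCompact (rSpecSet r ∩ basicOpen r s) :=
  isCompact_of_limIdeal_mem hr fun _ h =>
    ⟨limIdeal_mem_rSpecSet hr (Filter.mem_of_superset h inter_subset_left),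
      limIdeal_mem_basicOpen hr (Filter.mem_of_superset h inter_subset_right)⟩

end Ultrafilter

variable (r) in
lemma compl_rSpecSet [DecidableEq H] : (rSpecSet r)ᶜ = (basicOpen r ∅ ∩ (basicOpen r {1})ᶜ) ∪
    ⋃ (a : H) (b : H), basicOpen r {a, b} ∩ (basicOpen r {a * b})ᶜ := by
  ext I
  by_cases h1 : (1 : H) ∈ I.1 <;>
    simp [rSpecSet, basicOpen, eq_univ_iff_one_mem I, h1, and_comm, and_assoc]

theorem isClosed_constructibleTop_rSpecSet (hr : r.Finitary) :
    IsClosed[constructibleTop (RIdeals r)] (rSpecSet r) := by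
  have hopen (s t : Finset H) :
      IsOpen[constructibleTop (RIdeals r)] (basicOpen r s ∩ (basicOpen r t)ᶜ) :=
    isOpen_constructibleTop_inter_compl (isOpen_basicOpen r s) (isCompact_basicOpen hr s)
      (isOpen_basicOpen r t) (isCompact_basicOpen hr t)
  classical
  rw [← @isOpen_compl_iff _ _ (constructibleTop _), compl_rSpecSet]
  exact @IsOpen.union _ _ _ (constructibleTop _) (hopen ∅ {1}) <|
    @isOpen_iUnion _ _ (constructibleTop _) _ fun a =>
      @isOpen_iUnion _ _ (constructibleTop _) _ fun b => hopen {a, b} {a * b}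

lemma inter_basicOpen_nonempty {C : Set (RIdeals r)} (hC : IsIrreducible C) {s : Finset H}
    (hs : biInter C ∈ basicOpen r s) : (C ∩ basicOpen r s).Nonempty := by
  classical
  induction s using Finset.induction_on with
  | empty => simpa using hC.nonempty
  | insert x s _ ih =>
    rw [basicOpen_insert] at hs ⊢
    have hx : x ∉ ⋂ I ∈ C, I.1 := hs.1
    simp only [mem_iInter₂, not_forall] at hx
    obtain ⟨I, hIC, hxI⟩ := hx
    exact hC.2 _ _ (isOpen_setOf_notMem r x) (isOpen_basicOpen r s) ⟨I, hIC, hxI⟩ (ih hs.2)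

lemma biInter_mem_rSpecSet {C : Set (RIdeals r)} (hC : IsIrreducible C) (hCS : C ⊆ rSpecSet r) :
    biInter C ∈ rSpecSet r := by
  classical
  refine ⟨fun huniv => ?_, fun a b hab => ?_⟩
  · obtain ⟨I, hI⟩ := hC.nonempty
    exact (hCS hI).1 ((eq_univ_iff_one_mem I).2
      (mem_iInter₂.1 ((eq_univ_iff_one_mem _).1 huniv) I hI))
  · by_contra! hne
    obtain ⟨I, hIC, hI⟩ := inter_basicOpen_nonempty hC (s := {a, b}) (by simpa [basicOpen] using hne)
    rcases (hCS hIC).2 a b (mem_iInter₂.1 hab I hIC) with haI | hbI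
    · exact hI a (by simp) haI
    · exact hI b (by simp) hbI

lemma biInter_specializes {C : Set (RIdeals r)} {I : RIdeals r} (hI : I ∈ C) : biInter C ⤳ I :=
  specializes_iff_subset.2 (biInter_subset_of_mem hI)

lemma biInter_mem_closure {C : Set (RIdeals r)} (hC : IsIrreducible C) : biInter C ∈ closure C :=
  (isTopologicalBasis_basicOpen r).mem_closure_iff.2 <| forall_mem_range.2 fun _ hs =>
    inter_comm C _ ▸ inter_basicOpen_nonempty hC hs

instance quasiSober_rSpecSet : QuasiSober (rSpecSet r) := by
  refine ⟨fun {S} hS hSc => ?_⟩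
  have hC : IsIrreducible (Subtype.val '' S) := hS.image _ continuous_subtype_val.continuousOn
  refine ⟨⟨_, biInter_mem_rSpecSet hC (Subtype.coe_image_subset _ _)⟩,
    isGenericPoint_iff_specializes.2 fun J => ⟨fun h => h.mem_closed hSc ?_, fun hJ => ?_⟩⟩
  · exact hSc.closure_subset (closure_subtype.2 (biInter_mem_closure hC))
  · exact (subtype_specializes_iff _ _).2 (biInter_specializes (mem_image_of_mem _ hJ))

variable (r) in
lemma isTopologicalBasis_rSpecSet_basicOpen :
    IsTopologicalBasis (range fun s => (Subtype.val ⁻¹' basicOpen r s : Set (rSpecSet r))) := by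
  have := (isTopologicalBasis_basicOpen r).isInducing (IsInducing.subtypeVal (t := rSpecSet r))
  rw [← range_comp] at this
  exact this

lemma isCompact_preimage_basicOpen (hr : r.Finitary) (s : Finset H) :
    IsCompact (Subtype.val ⁻¹' basicOpen r s : Set (rSpecSet r)) := by
  rw [IsEmbedding.subtypeVal.isCompact_iff, Subtype.image_preimage_coe]
  exact isCompact_rSpecSet_inter_basicOpen hr s

theorem spectralSpace_rSpecSet (hr : r.Finitary) : SpectralSpace (rSpecSet r) := by
  classical
  have : CompactSpace (rSpecSet r) :=
    isCompact_iff_compactSpace.1 (by simpa using isCompact_rSpecSet_inter_basicOpen hr ∅)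
  exact
    { toQuasiSeparatedSpace := .of_isTopologicalBasis (isTopologicalBasis_rSpecSet_basicOpen r)
        fun s t => by
          simpa only [basicOpen_union, preimage_inter] using isCompact_preimage_basicOpen hr (s ∪ t)
      toPrespectralSpace := .of_isTopologicalBasis' (isTopologicalBasis_rSpecSet_basicOpen r)
        (isCompact_preimage_basicOpen hr) }

end RIdeals

theorem rSpec_proconstructible_and_spectral_general {H : Type*} [CommMonoidWithZero H] [IsCancelMulZero H]
    (r : IdealSystem H) (hr : r.Finitary) :
    @IsClosed _ (constructibleTop (RIdeals r)) (rSpecSet r) ∧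
    IsSpectralSpace ↥(rSpecSet r) :=
  have := RIdeals.spectralSpace_rSpecSet hr
  ⟨RIdeals.isClosed_constructibleTop_rSpecSet hr, SpectralSpace.isSpectralSpace _⟩

theorem rSpec_proconstructible_and_spectral {H : Type*} [CommMonoidWithZero H] [IsCancelMulZero H]
    [Nontrivial H] (r : IdealSystem H) (hr : r.Finitary) :
    @IsClosed _ (constructibleTop (RIdeals r)) (rSpecSet r) ∧
    IsSpectralSpace ↥(rSpecSet r) :=
  rSpec_proconstructible_and_spectral_general r hr
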